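/- arXiv:math/0611152 — 4 statements merged into one kernel-verified Lean document; each statement's English description precedes it below -/
import Mathlib

section
/- Let φ, ψ : [0,1] → ℝ be square-integrable functions and define K(φ) = ∫₀¹ e^{2∫₀ˣ φ(y) dy} dx (and K(ψ) analogously). Then |K(φ) − K(ψ)| ≤ e^{2‖φ‖_{L²([0,1])}} ( e^{2‖ψ − φ‖_{L²([0,1])}} − 1 ). -/
/-!
Write `Φ x = ∫₀ˣ φ` and `Δ x = ∫₀ˣ (ψ - φ)`. By Cauchy–Schwarz on `[0,1]`, `|Φ x| ≤ ‖φ‖₂` and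
`|Δ x| ≤ ‖ψ - φ‖₂` for `x ∈ [0,1]`. Since `e^{2(Φ+Δ)} - e^{2Φ} = e^{2Φ} (e^{2Δ} - 1)` and
`|e^u - 1| ≤ e^{|u|} - 1`, the two integrands differ pointwise by at most
`e^{2‖φ‖₂} (e^{2‖ψ-φ‖₂} - 1)`, and integrating over `[0,1]` gives the bound.
-/

open MeasureTheory Set

lemma abs_exp_sub_one_le_exp_abs_sub_one (u : ℝ) : |Real.exp u - 1| ≤ Real.exp |u| - 1 := by
  rcases le_or_gt 0 u with hu | hu
  · rw [abs_of_nonneg hu, abs_of_nonneg (sub_nonneg.2 (Real.one_le_exp hu))]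
  · rw [abs_of_neg hu, abs_of_neg (sub_neg.2 (Real.exp_lt_one_iff.2 hu))]
    nlinarith [Real.add_one_le_exp u, Real.add_one_le_exp (-u)]

lemma abs_exp_sub_exp_le {s t A B : ℝ} (hs : |s| ≤ A) (hts : |t - s| ≤ B) :
    |Real.exp t - Real.exp s| ≤ Real.exp A * (Real.exp B - 1) :=
  calc |Real.exp t - Real.exp s| = Real.exp s * |Real.exp (t - s) - 1| := by
        conv_rhs => rw [← Real.abs_exp s, ← abs_mul, mul_sub, ← Real.exp_add, add_sub_cancel,
          mul_one]
    _ ≤ Real.exp A * (Real.exp |t - s| - 1) :=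
        mul_le_mul (Real.exp_le_exp.2 ((le_abs_self s).trans hs))
          (abs_exp_sub_one_le_exp_abs_sub_one _) (abs_nonneg _) (Real.exp_pos _).le
    _ ≤ Real.exp A * (Real.exp B - 1) := by gcongr

lemma integral_abs_le_sqrt_integral_sq_mul {α : Type*} [MeasurableSpace α] {μ : Measure α}
    [IsFiniteMeasure μ] {f : α → ℝ} (hf : MemLp f 2 μ) :
    ∫ a, |f a| ∂μ ≤ (∫ a, f a ^ 2 ∂μ) ^ ((1:ℝ)/2) * μ.real univ ^ ((1:ℝ)/2) := by
  have h := integral_mul_norm_le_Lp_mul_Lq (μ := μ) Real.HolderConjugate.two_two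
    (f := f) (g := fun _ => (1:ℝ)) (by simpa using hf) (by simpa using memLp_const 1)
  simpa only [norm_one, mul_one, one_pow, integral_const, smul_eq_mul, Real.norm_eq_abs,
    Real.rpow_two, sq_abs] using h

lemma abs_intervalIntegral_le_sqrt_integral_sq_mul {f : ℝ → ℝ} {a b x : ℝ}
    (hf : MemLp f 2 (volume.restrict (Icc a b))) (hax : a ≤ x) (hxb : x ≤ b) :
    |∫ y in a..x, f y| ≤ (∫ y in a..b, f y ^ 2) ^ ((1:ℝ)/2) * (b - a) ^ ((1:ℝ)/2) := by
  have hab : a ≤ b := hax.trans hxb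
  have hf' : MemLp f 2 (volume.restrict (Ioc a b)) :=
    hf.mono_measure (Measure.restrict_mono Ioc_subset_Icc_self le_rfl)
  calc |∫ y in a..x, f y| ≤ ∫ y in a..x, |f y| := by
        simpa only [Real.norm_eq_abs] using
          intervalIntegral.norm_integral_le_integral_norm (f := f) (μ := volume) hax
    _ ≤ ∫ y in a..b, |f y| :=
        intervalIntegral.integral_mono_interval le_rfl hax hxb
          (Filter.Eventually.of_forall fun _ => abs_nonneg _)
          ((intervalIntegrable_iff_integrableOn_Ioc_of_le hab).2 (hf'.integrable one_le_two).abs)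
    _ ≤ (∫ y in a..b, f y ^ 2) ^ ((1:ℝ)/2) * (b - a) ^ ((1:ℝ)/2) := by
        simpa [intervalIntegral.integral_of_le hab, Real.volume_real_Ioc_of_le hab] using
          integral_abs_le_sqrt_integral_sq_mul hf'

lemma intervalIntegrable_comp_primitive {f g : ℝ → ℝ} {a b : ℝ} (hg : Continuous g)
    (hf : IntervalIntegrable f volume a b) :
    IntervalIntegrable (fun x => g (∫ t in a..x, f t)) volume a b :=
  (hg.comp_continuousOn
    (intervalIntegral.continuousOn_primitive_interval' hf left_mem_uIcc)).intervalIntegrable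

/-- For square-integrable `φ, ψ` on `[0,1]` and `K(φ) = ∫₀¹ e^{2∫₀ˣ φ}`,
`|K(φ) − K(ψ)| ≤ e^{2‖φ‖_{L²}} (e^{2‖ψ−φ‖_{L²}} − 1)`. -/
theorem K_lipschitz_bound
    (φ ψ : ℝ → ℝ)
    (hφ : MemLp φ 2 (volume.restrict (Set.Icc (0:ℝ) 1)))
    (hψ : MemLp ψ 2 (volume.restrict (Set.Icc (0:ℝ) 1))) :
    |(∫ x in (0:ℝ)..1, Real.exp (2 * ∫ y in (0:ℝ)..x, φ y))
        - ∫ x in (0:ℝ)..1, Real.exp (2 * ∫ y in (0:ℝ)..x, ψ y)|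
      ≤ Real.exp (2 * (∫ x in (0:ℝ)..1, (φ x) ^ 2) ^ ((1:ℝ)/2))
          * (Real.exp (2 * (∫ x in (0:ℝ)..1, (ψ x - φ x) ^ 2) ^ ((1:ℝ)/2)) - 1) := by
  set A := (∫ x in (0:ℝ)..1, (φ x) ^ 2) ^ ((1:ℝ)/2)
  set B := (∫ x in (0:ℝ)..1, (ψ x - φ x) ^ 2) ^ ((1:ℝ)/2)
  have hφi : IntervalIntegrable φ volume 0 1 :=
    (intervalIntegrable_iff_integrableOn_Icc_of_le zero_le_one).2 (hφ.integrable one_le_two)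
  have hψi : IntervalIntegrable ψ volume 0 1 :=
    (intervalIntegrable_iff_integrableOn_Icc_of_le zero_le_one).2 (hψ.integrable one_le_two)
  have hpointwise : ∀ x ∈ uIoc (0:ℝ) 1,
      ‖Real.exp (2 * ∫ y in (0:ℝ)..x, φ y) - Real.exp (2 * ∫ y in (0:ℝ)..x, ψ y)‖
        ≤ Real.exp (2 * A) * (Real.exp (2 * B) - 1) := by
    intro x hx
    obtain ⟨hx0, hx1⟩ := uIoc_of_le (zero_le_one' ℝ) ▸ hx
    have hsub : uIcc 0 x ⊆ uIcc (0:ℝ) 1 := uIcc_subset_uIcc_left (by simp [hx0.le, hx1])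
    have hφx : |∫ y in (0:ℝ)..x, φ y| ≤ A := by
      simpa [A] using abs_intervalIntegral_le_sqrt_integral_sq_mul hφ hx0.le hx1
    have hdx : |(∫ y in (0:ℝ)..x, ψ y) - ∫ y in (0:ℝ)..x, φ y| ≤ B := by
      rw [← intervalIntegral.integral_sub (hψi.mono_set hsub) (hφi.mono_set hsub)]
      simpa [B] using abs_intervalIntegral_le_sqrt_integral_sq_mul (hψ.sub hφ) hx0.le hx1
    rw [Real.norm_eq_abs, abs_sub_comm]
    refine abs_exp_sub_exp_le ?_ ?_
    · rw [abs_mul, abs_two]; linarith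
    · rw [← mul_sub, abs_mul, abs_two]; linarith
  have hexp : Continuous fun u : ℝ => Real.exp (2 * u) := by fun_prop
  rw [← intervalIntegral.integral_sub (intervalIntegrable_comp_primitive hexp hφi)
    (intervalIntegrable_comp_primitive hexp hψi)]
  simpa using intervalIntegral.norm_integral_le_of_norm_le_const hpointwise
end

section
/- Let u : ℝ × ℝ → ℝ be a smooth function, 1-periodic in the space variable, satisfying the KdV equation u_t − 6uu_x + u_xxx = 0. Then the quantity H₂(u(t)) = −∫₀¹ ( u(t,x)³ + (1/2) u_x(t,x)² ) dx is independent of t. -/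
open MeasureTheory Set Metric

/-- Partial derivative in the second (space) variable. -/
noncomputable def pdx (f : ℝ × ℝ → ℝ) : ℝ × ℝ → ℝ := fun p => fderiv ℝ f p (0, 1)

/-- Partial derivative in the first (time) variable. -/
noncomputable def pdt (f : ℝ × ℝ → ℝ) : ℝ × ℝ → ℝ := fun p => fderiv ℝ f p (1, 0)

lemma contDiff_pd {f : ℝ × ℝ → ℝ} (hf : ContDiff ℝ (⊤ : ℕ∞) f) (v : ℝ × ℝ) :
    ContDiff ℝ (⊤ : ℕ∞) (fun p => fderiv ℝ f p v) :=
  (hf.fderiv_right (by simp)).clm_apply contDiff_const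

lemma hasDerivAt_pdx {f : ℝ × ℝ → ℝ} (hf : ContDiff ℝ (⊤ : ℕ∞) f) (t x : ℝ) :
    HasDerivAt (fun y => f (t, y)) (pdx f (t, x)) x := by
  have h1 : HasDerivAt (fun y : ℝ => ((t, y) : ℝ × ℝ)) ((0 : ℝ), (1 : ℝ)) x :=
    (hasDerivAt_const x t).prodMk (hasDerivAt_id x)
  have h2 : HasFDerivAt f (fderiv ℝ f (t, x)) (t, x) :=
    (hf.differentiable (by simp) (t, x)).hasFDerivAt
  exact h2.comp_hasDerivAt x h1

lemma hasDerivAt_pdt {f : ℝ × ℝ → ℝ} (hf : ContDiff ℝ (⊤ : ℕ∞) f) (t x : ℝ) :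
    HasDerivAt (fun s => f (s, x)) (pdt f (t, x)) t := by
  have h1 : HasDerivAt (fun s : ℝ => ((s, x) : ℝ × ℝ)) ((1 : ℝ), (0 : ℝ)) t :=
    (hasDerivAt_id t).prodMk (hasDerivAt_const t x)
  have h2 : HasFDerivAt f (fderiv ℝ f (t, x)) (t, x) :=
    (hf.differentiable (by simp) (t, x)).hasFDerivAt
  exact h2.comp_hasDerivAt t h1

lemma clairaut {f : ℝ × ℝ → ℝ} (hf : ContDiff ℝ (⊤ : ℕ∞) f) (p : ℝ × ℝ) :
    pdx (pdt f) p = pdt (pdx f) p := by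
  have hd : ∀ q, HasFDerivAt f (fderiv ℝ f q) q := fun q =>
    (hf.differentiable (by simp) q).hasFDerivAt
  have hd2 : HasFDerivAt (fderiv ℝ f) (fderiv ℝ (fderiv ℝ f) p) p :=
    (((hf.fderiv_right (m := (⊤ : ℕ∞)) (by simp)).differentiable (by simp)) p).hasFDerivAt
  have hsymm := second_derivative_symmetric hd hd2 ((1 : ℝ), (0 : ℝ)) ((0 : ℝ), (1 : ℝ))
  have e : ∀ v w : ℝ × ℝ,
      fderiv ℝ (fun q => fderiv ℝ f q v) p w = fderiv ℝ (fderiv ℝ f) p w v := by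
    intro v w
    have h3 : HasFDerivAt (fun q => fderiv ℝ f q v)
        ((ContinuousLinearMap.apply ℝ ℝ v).comp (fderiv ℝ (fderiv ℝ f) p)) p :=
      (ContinuousLinearMap.apply ℝ ℝ v).hasFDerivAt.comp p hd2
    rw [h3.fderiv]; rfl
  unfold pdx pdt
  rw [e, e, hsymm]

lemma pdx_per {f : ℝ × ℝ → ℝ} (hf : ContDiff ℝ (⊤ : ℕ∞) f)
    (hper : ∀ t x, f (t, x + 1) = f (t, x)) (t x : ℝ) :
    pdx f (t, x + 1) = pdx f (t, x) := by
  have h1 : HasDerivAt (fun y => f (t, y)) (pdx f (t, x + 1)) (x + 1) :=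
    hasDerivAt_pdx hf t (x + 1)
  have h2 : HasDerivAt (fun y => f (t, y + 1)) (pdx f (t, x + 1) * 1) x :=
    by have := h1.comp x ((hasDerivAt_id x).add_const 1); exact this
  have h3 : (fun y => f (t, y + 1)) = fun y => f (t, y) := funext fun y => hper t y
  rw [h3, mul_one] at h2
  exact h2.unique (hasDerivAt_pdx hf t x)

lemma pdt_per {f : ℝ × ℝ → ℝ} (hf : ContDiff ℝ (⊤ : ℕ∞) f)
    (hper : ∀ t x, f (t, x + 1) = f (t, x)) (t x : ℝ) :
    pdt f (t, x + 1) = pdt f (t, x) := by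
  have h1 : HasDerivAt (fun s => f (s, x + 1)) (pdt f (t, x + 1)) t :=
    hasDerivAt_pdt hf t (x + 1)
  have h3 : (fun s => f (s, x + 1)) = fun s => f (s, x) := funext fun s => hper s x
  rw [h3] at h1
  exact h1.unique (hasDerivAt_pdt hf t x)


/-- For a smooth 1-periodic-in-space solution `u` of KdV `u_t − 6uu_x + u_xxx = 0`,
the Hamiltonian `H₂(u(t)) = −∫₀¹ (u(t,x)³ + (1/2) u_x(t,x)²) dx` is independent of `t`. -/
theorem H2_invariant_kdv
    (u : ℝ → ℝ → ℝ)
    (hu_smooth : ContDiff ℝ (⊤ : ℕ∞) (fun p : ℝ × ℝ => u p.1 p.2))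
    (hu_per : ∀ t x, u t (x + 1) = u t x)
    (hu_kdv : ∀ t x,
      deriv (fun s => u s x) t - 6 * u t x * deriv (u t) x
        + deriv (deriv (deriv (u t))) x = 0) :
    ∀ t₁ t₂ : ℝ,
      -∫ x in (0:ℝ)..1, ((u t₁ x) ^ 3 + (1/2) * (deriv (u t₁) x) ^ 2)
        = -∫ x in (0:ℝ)..1, ((u t₂ x) ^ 3 + (1/2) * (deriv (u t₂) x) ^ 2) := by
  intro t₁ t₂
  set U : ℝ × ℝ → ℝ := fun p => u p.1 p.2 with hU_def
  have hU : ContDiff ℝ (⊤ : ℕ∞) U := hu_smooth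
  set w1 : ℝ × ℝ → ℝ := pdx U with hw1_def
  have hw1 : ContDiff ℝ (⊤ : ℕ∞) w1 := contDiff_pd hU _
  set w2 : ℝ × ℝ → ℝ := pdx w1 with hw2_def
  have hw2 : ContDiff ℝ (⊤ : ℕ∞) w2 := contDiff_pd hw1 _
  set w3 : ℝ × ℝ → ℝ := pdx w2 with hw3_def
  have hw3 : ContDiff ℝ (⊤ : ℕ∞) w3 := contDiff_pd hw2 _
  set ut : ℝ × ℝ → ℝ := pdt U with hut_def
  have hut : ContDiff ℝ (⊤ : ℕ∞) ut := contDiff_pd hU _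
  set w1t : ℝ × ℝ → ℝ := pdt w1 with hw1t_def
  have hw1t : ContDiff ℝ (⊤ : ℕ∞) w1t := contDiff_pd hw1 _
  -- identification of derivatives
  have hL1 : ∀ t, deriv (u t) = fun x => w1 (t, x) := by
    intro t; funext x
    exact (hasDerivAt_pdx hU t x).deriv
  have hL2 : ∀ t, deriv (deriv (u t)) = fun x => w2 (t, x) := by
    intro t; rw [hL1 t]; funext x
    exact (hasDerivAt_pdx hw1 t x).deriv
  have hL3 : ∀ t x, deriv (deriv (deriv (u t))) x = w3 (t, x) := by
    intro t x; rw [hL2 t]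
    exact (hasDerivAt_pdx hw2 t x).deriv
  have hL4 : ∀ t x, deriv (fun s => u s x) t = ut (t, x) := fun t x =>
    (hasDerivAt_pdt hU t x).deriv
  have hkdv : ∀ t x, ut (t, x) = 6 * u t x * w1 (t, x) - w3 (t, x) := by
    intro t x
    have h := hu_kdv t x
    rw [hL4, hL3, hL1 t] at h
    linarith
  -- periodicity
  have hUper : ∀ t x, U (t, x + 1) = U (t, x) := fun t x => hu_per t x
  have per1 : ∀ t x, w1 (t, x + 1) = w1 (t, x) := pdx_per hU hUper
  have per2 : ∀ t x, w2 (t, x + 1) = w2 (t, x) := pdx_per hw1 per1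
  have perut : ∀ t x, ut (t, x + 1) = ut (t, x) := pdt_per hU hUper
  -- t-derivative of the integrand
  have hderiv_t : ∀ t x, HasDerivAt (fun s => (u s x) ^ 3 + 1/2 * (w1 (s, x)) ^ 2)
      (3 * (u t x) ^ 2 * ut (t, x) + w1 (t, x) * w1t (t, x)) t := by
    intro t x
    have h1 : HasDerivAt (fun s => u s x) (ut (t, x)) t := hasDerivAt_pdt hU t x
    have h2 : HasDerivAt (fun s => w1 (s, x)) (w1t (t, x)) t := hasDerivAt_pdt hw1 t x
    have := (h1.pow 3).add ((h2.pow 2).const_mul (1/2 : ℝ))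
    refine this.congr_deriv (Eq.symm ?_)
    ring
  -- x-derivative of G
  have hGx : ∀ t x, HasDerivAt
      (fun y => w1 (t, y) * ut (t, y) + 9/2 * (u t y) ^ 4
        - 3 * (u t y) ^ 2 * w2 (t, y) + 1/2 * (w2 (t, y)) ^ 2)
      (3 * (u t x) ^ 2 * ut (t, x) + w1 (t, x) * w1t (t, x)) x := by
    intro t x
    have hu' : HasDerivAt (fun y => u t y) (w1 (t, x)) x := hasDerivAt_pdx hU t x
    have h1 : HasDerivAt (fun y => w1 (t, y)) (w2 (t, x)) x := hasDerivAt_pdx hw1 t x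
    have h2 : HasDerivAt (fun y => w2 (t, y)) (w3 (t, x)) x := hasDerivAt_pdx hw2 t x
    have h3 : HasDerivAt (fun y => ut (t, y)) (w1t (t, x)) x := by
      have h := hasDerivAt_pdx hut t x
      have e : pdx ut (t, x) = w1t (t, x) := clairaut hU (t, x)
      rwa [e] at h
    have big := (((h1.mul h3).add ((hu'.pow 4).const_mul (9/2 : ℝ))).sub
        (((hu'.pow 2).const_mul (3 : ℝ)).mul h2)).add ((h2.pow 2).const_mul (1/2 : ℝ))
    refine big.congr_deriv (Eq.symm ?_)
    have hk := hkdv t x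
    push_cast [Pi.pow_apply]
    linear_combination (3 * u t x ^ 2 - w2 (t, x)) * hk
  -- continuity facts
  have contU : Continuous U := hU.continuous
  have contu : ∀ t, Continuous (u t) := by
    intro t
    exact contU.comp (continuous_const.prodMk continuous_id)
  have contw1x : ∀ t, Continuous (fun x => w1 (t, x)) :=
    fun t => hw1.continuous.comp (continuous_const.prodMk continuous_id)
  have contw2x : ∀ t, Continuous (fun x => w2 (t, x)) :=
    fun t => hw2.continuous.comp (continuous_const.prodMk continuous_id)
  have contutx : ∀ t, Continuous (fun x => ut (t, x)) :=
    fun t => hut.continuous.comp (continuous_const.prodMk continuous_id)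
  have contw1tx : ∀ t, Continuous (fun x => w1t (t, x)) :=
    fun t => hw1t.continuous.comp (continuous_const.prodMk continuous_id)
  have contf' : Continuous (fun p : ℝ × ℝ => 3 * (U p) ^ 2 * ut p + w1 p * w1t p) :=
    ((continuous_const.mul (contU.pow 2)).mul hut.continuous).add
      (hw1.continuous.mul hw1t.continuous)
  -- the integral of the t-derivative vanishes
  have hzero : ∀ t : ℝ, (∫ x in (0:ℝ)..1,
      (3 * (u t x) ^ 2 * ut (t, x) + w1 (t, x) * w1t (t, x))) = 0 := by
    intro t
    have hint : IntervalIntegrable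
        (fun x => 3 * (u t x) ^ 2 * ut (t, x) + w1 (t, x) * w1t (t, x)) volume 0 1 := by
      apply Continuous.intervalIntegrable
      exact ((continuous_const.mul ((contu t).pow 2)).mul (contutx t)).add
        ((contw1x t).mul (contw1tx t))
    have heq := intervalIntegral.integral_eq_sub_of_hasDerivAt
      (f := fun y => w1 (t, y) * ut (t, y) + 9/2 * (u t y) ^ 4
        - 3 * (u t y) ^ 2 * w2 (t, y) + 1/2 * (w2 (t, y)) ^ 2)
      (fun x _ => hGx t x) hint
    rw [heq]
    have e1 : w1 (t, 1) = w1 (t, 0) := by simpa using per1 t 0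
    have e2 : w2 (t, 1) = w2 (t, 0) := by simpa using per2 t 0
    have e3 : ut (t, 1) = ut (t, 0) := by simpa using perut t 0
    have eu : u t 1 = u t 0 := by simpa using hu_per t 0
    simp only [e1, e2, e3, eu]
    ring
  -- derivative of the energy in time
  have key : ∀ t₀ : ℝ, HasDerivAt
      (fun t => ∫ x in (0:ℝ)..1, ((u t x) ^ 3 + 1/2 * (w1 (t, x)) ^ 2)) 0 t₀ := by
    intro t₀
    have hcomp : IsCompact (Icc (t₀ - 1) (t₀ + 1) ×ˢ Icc (0:ℝ) 1) :=
      isCompact_Icc.prod isCompact_Icc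
    obtain ⟨C, hC⟩ := hcomp.exists_bound_of_continuousOn contf'.continuousOn
    have hd := intervalIntegral.hasDerivAt_integral_of_dominated_loc_of_deriv_le
      (F := fun t x => (u t x) ^ 3 + 1/2 * (w1 (t, x)) ^ 2)
      (F' := fun t x => 3 * (u t x) ^ 2 * ut (t, x) + w1 (t, x) * w1t (t, x))
      (bound := fun _ => C) (a := 0) (b := 1) (μ := volume) (x₀ := t₀) (s := ball t₀ 1)
      (ball_mem_nhds t₀ one_pos)
      (Filter.Eventually.of_forall fun t =>
        (((contu t).pow 3).add (continuous_const.mul ((contw1x t).pow 2))).aestronglyMeasurable)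
      (by
        apply Continuous.intervalIntegrable
        exact ((contu t₀).pow 3).add (continuous_const.mul ((contw1x t₀).pow 2)))
      (((continuous_const.mul ((contu t₀).pow 2)).mul (contutx t₀)).add
        ((contw1x t₀).mul (contw1tx t₀))).aestronglyMeasurable
      (by
        apply Filter.Eventually.of_forall
        intro x hx t ht
        have hx' : x ∈ Icc (0:ℝ) 1 := by
          rw [Set.uIoc_of_le (by norm_num : (0:ℝ) ≤ 1)] at hx
          exact ⟨le_of_lt hx.1, hx.2⟩
        have ht' : t ∈ Icc (t₀ - 1) (t₀ + 1) := by
          rw [mem_ball, Real.dist_eq] at ht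
          have := abs_lt.1 ht
          constructor <;> linarith [this.1, this.2]
        exact hC (t, x) ⟨ht', hx'⟩)
      intervalIntegrable_const
      (Filter.Eventually.of_forall fun x _ t _ => hderiv_t t x)
    rw [hzero t₀] at hd
    exact hd.2
  -- conclude constancy
  have hmain := is_const_of_deriv_eq_zero
    (f := fun t => ∫ x in (0:ℝ)..1, ((u t x) ^ 3 + 1/2 * (w1 (t, x)) ^ 2))
    (fun t => (key t).differentiableAt) (fun t => (key t).deriv) t₁ t₂
  simp only [hL1]
  rw [hmain]
end

section
/- Fix n ≥ 1 and consider the Kruskal–Zabusky discretization of KdV: the ODE system on ℝ^{ℤ/nℤ} given by u̇_i = (u_{i+1} + u_i + u_{i−1})(u_{i+1} − u_{i−1}) − (u_{i+2} − 2u_{i+1} + 2u_{i−1} − u_{i−2}), indices taken mod n. If u : ℝ → ℝ^{ℤ/nℤ} is differentiable and satisfies this system for all t, then Σ_{i ∈ ℤ/nℤ} u_i(t)² is independent of t. -/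
/-!
Multiplying the `i`-th equation by `uᵢ` turns its right-hand side into a discrete divergence
`Φᵢ - Φᵢ₋₁` of an explicit flux `Φ`, so `d/dt Σ uᵢ² = 2 Σ uᵢ u̇ᵢ` telescopes to zero around the cycle.
-/

open Finset

theorem sum_sub_comp_sub_eq_zero {G M : Type*} [AddGroup G] [Fintype G] [AddCommGroup M]
    (f : G → M) (c : G) : ∑ i, (f i - f (i - c)) = 0 := by
  rw [sum_sub_distrib, ← (Equiv.subRight c).sum_comp f]
  exact sub_self _

section KruskalZabusky

variable {G R : Type*} [AddCommGroupWithOne G] [CommRing R]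

def kruskalZabusky (v : G → R) (i : G) : R :=
  (v (i + 1) + v i + v (i - 1)) * (v (i + 1) - v (i - 1))
    - (v (i + 2) - 2 * v (i + 1) + 2 * v (i - 1) - v (i - 2))

def kruskalZabuskyFlux (v : G → R) (j : G) : R :=
  v j * v (j + 1) * (v j + v (j + 1)) + 2 * v j * v (j + 1) - v j * v (j + 2)
    - v (j - 1) * v (j + 1)

theorem mul_kruskalZabusky_eq_flux_sub (v : G → R) (i : G) :
    v i * kruskalZabusky v i = kruskalZabuskyFlux v i - kruskalZabuskyFlux v (i - 1) := by
  have h₁ : i - 1 + 1 = i := sub_add_cancel i 1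
  have h₂ : i - 1 + 2 = i + 1 := by rw [← one_add_one_eq_two]; abel
  have h₃ : i - 1 - 1 = i - 2 := by rw [← one_add_one_eq_two]; abel
  simp only [kruskalZabusky, kruskalZabuskyFlux, h₁, h₂, h₃]
  ring

theorem sum_mul_kruskalZabusky_eq_zero [Fintype G] (v : G → R) :
    ∑ i, v i * kruskalZabusky v i = 0 := by
  simp only [mul_kruskalZabusky_eq_flux_sub]
  exact sum_sub_comp_sub_eq_zero _ 1

end KruskalZabusky

theorem hasDerivAt_sum_sq {ι : Type*} [Fintype ι] {u : ℝ → ι → ℝ} {u' : ι → ℝ} {t : ℝ}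
    (hu : ∀ i, HasDerivAt (fun s => u s i) (u' i) t) :
    HasDerivAt (fun s => ∑ i, u s i ^ 2) (2 * ∑ i, u t i * u' i) t := by
  rw [mul_sum]
  exact HasDerivAt.fun_sum fun i _ => ((hu i).fun_pow 2).congr_deriv (by norm_num; ring)

/-- The Kruskal–Zabusky discretization of KdV conserves `Σᵢ uᵢ²`. -/
theorem kruskal_zabusky_conserves_sum_sq
    (n : ℕ) [NeZero n]
    (u : ℝ → ZMod n → ℝ)
    (hu : ∀ (t : ℝ) (i : ZMod n), HasDerivAt (fun s => u s i)
      ((u t (i + 1) + u t i + u t (i - 1)) * (u t (i + 1) - u t (i - 1))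
        - (u t (i + 2) - 2 * u t (i + 1) + 2 * u t (i - 1) - u t (i - 2))) t) :
    ∀ t₁ t₂ : ℝ,
      ∑ i : ZMod n, (u t₁ i) ^ 2 = ∑ i : ZMod n, (u t₂ i) ^ 2 := by
  have hderiv (t : ℝ) : HasDerivAt (fun s => ∑ i, u s i ^ 2) 0 t := by
    simpa [sum_mul_kruskalZabusky_eq_zero] using
      hasDerivAt_sum_sq (u' := kruskalZabusky (u t)) (hu t)
  exact is_const_of_deriv_eq_zero (fun t => (hderiv t).differentiableAt)
    (fun t => (hderiv t).deriv)
end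

section
/- Fix n ≥ 1, α ∈ ℝ, and consider the completely integrable discretization of KdV on ℝ^{ℤ/nℤ}: u̇_i = (1 − α u_i)[ −α u_{i−1}(u_{i−2} − u_i) − α(u_{i−1} + 2u_i + u_{i+1})(u_{i−1} − u_{i+1}) − α u_{i+1}(u_i − u_{i+2}) + u_{i−2} − 2u_{i−1} + 2u_{i+1} − u_{i+2} ], indices mod n. If u : ℝ → ℝ^{ℤ/nℤ} is differentiable and satisfies this system for all t, then the quantity Q(u(t)) = Σ_{i ∈ ℤ/nℤ} ( u_i(t)² + 2 u_i(t) u_{i+1}(t) ) is independent of t. -/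
/-- Telescoping antiderivative for the conserved quantity computation:
`a = u (i-2)`, `b = u (i-1)`, `c = u i`, `d = u (i+1)`. -/
def Rpoly (α a b c d : ℝ) : ℝ :=
  (-1 : ℝ)*α*b^2*d + (-1 : ℝ)*α*b^3 + (-1 : ℝ)*α*b*a*d + (-1 : ℝ)*α*b^2*a
  + (-2 : ℝ)*α*b*c*d + (-2 : ℝ)*α*b*a*c + (-1 : ℝ)*α*a*c*d + (-1 : ℝ)*α*a*c^2
  + (-1 : ℝ)*α*c^2*d + (-1 : ℝ)*α*c^3 + (1 : ℝ)*α^2*b*c^3 + (1 : ℝ)*α^2*b*c^2*d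
  + (2 : ℝ)*α^2*b^2*c^2 + (1 : ℝ)*b*d + (-2 : ℝ)*b^2 + (1 : ℝ)*b*a + (1 : ℝ)*a*d
  + (1 : ℝ)*α^2*b^2*c*d + (1 : ℝ)*α^2*b^3*c + (1 : ℝ)*α^2*b^2*a*c + (-1 : ℝ)*b*c
  + (1 : ℝ)*a*c + (1 : ℝ)*α^2*b*a*c*d + (1 : ℝ)*c*d + (1 : ℝ)*α^2*b*a*c^2
  + (-2 : ℝ)*c^2

/-- The completely integrable discretization of KdV with parameter `α` conserves
`Q(u) = Σᵢ (uᵢ² + 2uᵢuᵢ₊₁)`. -/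
theorem integrable_discretization_conserves_Q
    (n : ℕ) [NeZero n] (α : ℝ)
    (u : ℝ → ZMod n → ℝ)
    (hu : ∀ (t : ℝ) (i : ZMod n), HasDerivAt (fun s => u s i)
      ((1 - α * u t i) *
        (-(α * u t (i - 1) * (u t (i - 2) - u t i))
          - α * (u t (i - 1) + 2 * u t i + u t (i + 1)) * (u t (i - 1) - u t (i + 1))
          - α * u t (i + 1) * (u t i - u t (i + 2))
          + u t (i - 2) - 2 * u t (i - 1) + 2 * u t (i + 1) - u t (i + 2))) t) :
    ∀ t₁ t₂ : ℝ,
      ∑ i : ZMod n, ((u t₁ i) ^ 2 + 2 * u t₁ i * u t₁ (i + 1))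
        = ∑ i : ZMod n, ((u t₂ i) ^ 2 + 2 * u t₂ i * u t₂ (i + 1)) := by
  have shift : ∀ g : ZMod n → ℝ, ∑ i : ZMod n, g (i + 1) = ∑ i : ZMod n, g i := by
    intro g
    exact Fintype.sum_equiv (Equiv.addRight 1) _ _ (fun i => rfl)
  have key : ∀ t : ℝ, HasDerivAt
      (fun s => ∑ i : ZMod n, ((u s i) ^ 2 + 2 * u s i * u s (i + 1))) 0 t := by
    intro t
    set F : ZMod n → ℝ := fun i => (1 - α * u t i) *
        (-(α * u t (i - 1) * (u t (i - 2) - u t i))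
          - α * (u t (i - 1) + 2 * u t i + u t (i + 1)) * (u t (i - 1) - u t (i + 1))
          - α * u t (i + 1) * (u t i - u t (i + 2))
          + u t (i - 2) - 2 * u t (i - 1) + 2 * u t (i + 1) - u t (i + 2)) with hF
    have h1 : HasDerivAt
        (fun s => ∑ i : ZMod n, ((u s i) ^ 2 + 2 * u s i * u s (i + 1)))
        (∑ i : ZMod n, ((2 : ℕ) * u t i ^ (2 - 1) * F i
          + ((2 * F i) * u t (i + 1) + (2 * u t i) * F (i + 1)))) t := by
      apply HasDerivAt.fun_sum
      intro i _
      exact ((hu t i).pow 2).add (((hu t i).const_mul 2).mul (hu t (i + 1)))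
    have h2 : (∑ i : ZMod n, ((2 : ℕ) * u t i ^ (2 - 1) * F i
          + ((2 * F i) * u t (i + 1) + (2 * u t i) * F (i + 1)))) = 0 := by
      have hsplit : (∑ i : ZMod n, ((2 : ℕ) * u t i ^ (2 - 1) * F i
            + ((2 * F i) * u t (i + 1) + (2 * u t i) * F (i + 1))))
          = (∑ i : ZMod n, ((2 : ℕ) * u t i ^ (2 - 1) * F i + (2 * F i) * u t (i + 1)))
            + ∑ i : ZMod n, (2 * u t i) * F (i + 1) := by
        rw [← Finset.sum_add_distrib]
        apply Finset.sum_congr rfl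
        intro i _
        ring
      have hshift : (∑ i : ZMod n, (2 * u t i) * F (i + 1))
          = ∑ i : ZMod n, (2 * u t (i - 1)) * F i := by
        have := shift (fun i => (2 * u t (i - 1)) * F i)
        simp only [add_sub_cancel_right] at this
        exact this
      rw [hsplit, hshift, ← Finset.sum_add_distrib]
      have hRw : (∑ i : ZMod n, (((2 : ℕ) * u t i ^ (2 - 1) * F i + (2 * F i) * u t (i + 1))
            + (2 * u t (i - 1)) * F i))
          = ∑ i : ZMod n,
            (2 * Rpoly α (u t (i - 2)) (u t (i - 1)) (u t i) (u t (i + 1))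
              - 2 * Rpoly α (u t (i + 1 - 2)) (u t (i + 1 - 1)) (u t (i + 1)) (u t (i + 1 + 1))) := by
        apply Finset.sum_congr rfl
        intro i _
        have e1 : i + 1 - 2 = i - 1 := by ring
        have e2 : i + 1 - 1 = i := by ring
        have e3 : i + 1 + 1 = i + 2 := by ring
        rw [e1, e2, e3, hF]
        simp only [Rpoly]
        push_cast
        ring
      rw [hRw, Finset.sum_sub_distrib]
      have := shift (fun i =>
        2 * Rpoly α (u t (i - 2)) (u t (i - 1)) (u t i) (u t (i + 1)))
      rw [this, sub_self]
    rw [← h2]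
    exact h1
  intro t₁ t₂
  exact is_const_of_deriv_eq_zero
    (fun t => (key t).differentiableAt) (fun t => (key t).deriv) t₁ t₂
end
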